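/- Let K ∈ N, 0 ≤ r ≤ K and M > 2K. Then for every sequence (I_1,...,I_r) ∈ ℐ^{(2)}_r (with pairs {i_1,j_1},...,{i_r,j_r}), every N ≥ 2 and every R > 0, the rewired constraint set is contained in the main constraint set: 𝒞^{rew}_{r,N,R,M}(I⃗) ⊆ 𝒞^{main}_{r,N,R,M}. -/

import Mathlib

/-!
For a coordinate outside the colliding pair of block `m`, the rewired constraint is the main one.
For a coordinate in the pair, go from `x_m` back to `y_{p(m)}` (the rewired constraint) and then
forward to `y_{m-1}` through the intermediate blocks, whose steps `y_k → x_{k+1} → y_{k+1}` are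
diffusive (the first one by induction on `m`). The gap condition bounds the elapsed time
`D = b_{m-1} - b_{p(m)}` by `A / (M - 1)` with `A = a_m - b_{m-1}`, and Cauchy–Schwarz bounds the
walk over the `n = m - 1 - p(m) < K` intermediate blocks by `R √(2n) √D`. The constant
`√(1 - 1/M) (1 - √((2K - 1)/(M - 1)))` is exactly what makes the two contributions add up to at
most `R √A`.
-/

open scoped BigOperators
open Filter

noncomputable section
namespace ET

open scoped Classical

/-- indicator of a proposition -/
def ind (p : Prop) : ℝ := if p then 1 else 0

/-- the four nearest-neighbour steps in `ℤ²` -/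
def nbrs : Finset (ℤ × ℤ) := {(1,0), (-1,0), (0,1), (0,-1)}

abbrev Step := {p : ℤ × ℤ // p ∈ nbrs}

/-- `q n x`: the `n`-step transition probability of the simple symmetric random walk
on `ℤ²`, i.e. `4^{-n}` times the number of nearest-neighbour paths of length `n`
from `0` to `x`. -/
def q (n : ℕ) (x : ℤ × ℤ) : ℝ :=
  (Nat.card {f : Fin n → Step // (∑ i, (f i : ℤ × ℤ)) = x} : ℝ) / 4 ^ n

/-- `σ_N(β) = e^{πβ/log N} - 1` -/
def sig (N : ℕ) (β : ℝ) : ℝ := Real.exp (Real.pi * β / Real.log N) - 1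

/-- `R_N = Σ_{n=1}^N q_{2n}(0)` -/
def RR (N : ℕ) : ℝ := ∑ n ∈ Finset.Icc 1 N, q (2 * n) 0

/-- The replica weight `U_N^β(n,x)`. -/
def U (N : ℕ) (β : ℝ) (n : ℕ) (x : ℤ × ℤ) : ℝ :=
  if n = 0 then (if x = 0 then 1 else 0)
  else
    sig N β * q n x ^ 2 +
      ∑' k : ℕ, sig N β ^ (k + 2) *
        ∑' tz : (Fin (k + 1) → ℕ) × (Fin (k + 1) → ℤ × ℤ),
          ind (StrictMono tz.1 ∧ 0 < tz.1 0 ∧ tz.1 (Fin.last k) < n) *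
            (q (tz.1 0) (tz.2 0) ^ 2 *
              (∏ j : Fin k,
                q (tz.1 j.succ - tz.1 j.castSucc) (tz.2 j.succ - tz.2 j.castSucc) ^ 2) *
              q (n - tz.1 (Fin.last k)) (x - tz.2 (Fin.last k)) ^ 2)

/-- `U_N^β(n) = Σ_x U_N^β(n,x)` -/
def Usum (N : ℕ) (β : ℝ) (n : ℕ) : ℝ := ∑' x : ℤ × ℤ, U N β n x

/-- position after `m` steps of the walk encoded by `f` -/
def walkPos {n : ℕ} (f : Fin n → Step) (m : ℕ) : ℤ × ℤ :=
  ∑ i ∈ Finset.univ.filter (fun i : Fin n => (i : ℕ) < m), (f i : ℤ × ℤ)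

/-- collision local time up to time `N` of walks encoded by `f` and `g` -/
def colls (N : ℕ) (f g : Fin N → Step) : ℝ :=
  ∑ m ∈ Finset.Icc 1 N, ind (walkPos f m = walkPos g m)


/-- predecessor index in `Fin r` (truncated at 0) -/
def fpred {r : ℕ} (i : Fin r) : Fin r :=
  ⟨(i : ℕ) - 1, lt_of_le_of_lt (Nat.sub_le _ _) i.isLt⟩

/-- value at the previous index, with the convention that the value at "index 0 - 1"
is `0` -/
def prev {r : ℕ} {α : Type*} [Zero α] (t : Fin r → α) (i : Fin r) : α :=
  if (i : ℕ) = 0 then 0 else t (fpred i)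

end ET

namespace ET

open scoped Classical

/-- partitions of `{1,…,h}` -/
abbrev Pt (h : ℕ) := Finpartition (Finset.univ : Finset (Fin h))

/-- `k` and `l` lie in the same part of the partition `I` -/
def samePart {h : ℕ} (I : Pt h) (k l : Fin h) : Prop := ∃ t ∈ I.parts, k ∈ t ∧ l ∈ t

/-- `x ∼ I` : the vector `x ∈ (ℤ²)^h` is constant on each part of `I` -/
def simRel {h : ℕ} (I : Pt h) (x : Fin h → ℤ × ℤ) : Prop :=
  ∀ k l : Fin h, samePart I k l → x k = x l

/-- the pairs `i < j` lying in a common part of `I` -/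
def pairsOf (h : ℕ) (I : Pt h) : Finset (Fin h × Fin h) :=
  Finset.univ.filter fun p : Fin h × Fin h => p.1 < p.2 ∧ samePart I p.1 p.2

/-- the mixed collision weight `σ_N(I) = Π_{i<j, i∼j} σ_N^{i,j}` -/
def sigI (h N : ℕ) (β : Fin h → Fin h → ℝ) (I : Pt h) : ℝ :=
  ∏ p ∈ pairsOf h I, sig N (β p.1 p.2)

/-- the constrained evolution
`Q_n^{I;J}(x,y) = 1_{x∼I} (Π_i q_n(y^{(i)}-x^{(i)})) 1_{y∼J}` -/
def Qker (h : ℕ) (n : ℕ) (I J : Pt h) (x y : Fin h → ℤ × ℤ) : ℝ :=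
  ind (simRel I x) * (∏ i : Fin h, q n (y i - x i)) * ind (simRel J y)

/-- the replica evolution `𝖴_n^J(x,y)`; for `J` with unique non-singleton part a
pair `{k,l}` the sum below has exactly one term, and equals
`1_{x∼J} 1_{y∼J} U_N^{β_{k,l}}(n, y^{(k)}-x^{(k)}) Π_{i≠k,l} q_n(y^{(i)}-x^{(i)})`. -/
def Uker (h N : ℕ) (β : Fin h → Fin h → ℝ) (J : Pt h) (n : ℕ) (x y : Fin h → ℤ × ℤ) : ℝ :=
  ind (simRel J x) * ind (simRel J y) *
    ∑ p ∈ pairsOf h J,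
      U N (β p.1 p.2) n (y p.1 - x p.1) *
        ∏ i ∈ Finset.univ.filter (fun i : Fin h => i ≠ p.1 ∧ i ≠ p.2), q n (y i - x i)

/-- the combined evolution `P_n^{I;J}` -/
def Pker (h N : ℕ) (β : Fin h → Fin h → ℝ) (n : ℕ) (I J : Pt h) (x y : Fin h → ℤ × ℤ) : ℝ :=
  if J.parts.card = h - 1 then
    ∑ m ∈ Finset.Icc 1 n, ∑' z : Fin h → ℤ × ℤ, Qker h m I J x z * Uker h N β J (n - m) z y
  else Qker h n I J x y

/-- admissible sequences of partitions in the expansion of `M^β_{N,h}`: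
each `I_i` has at least one non-singleton part, and `I_i ≠ I_{i+1}` whenever
`|I_i| = h-1` -/
def seqOKfull (h : ℕ) {r : ℕ} (I : Fin r → Pt h) : Prop :=
  (∀ i : Fin r, (I i).parts.card < h) ∧
    ∀ (j : ℕ) (hj : j + 1 < r),
      (I ⟨j, by omega⟩).parts.card = h - 1 → I ⟨j, by omega⟩ ≠ I ⟨j + 1, hj⟩

/-- the `r`-th term `H_{r,N}` of the chaos expansion \eqref{def:Pexpansion}, with
`I_0 = ∘` the one-part partition, `n_0 = 0`, `x_0 = 0`; `extra` is an additional
constraint on the sequence of partitions (`fun _ => True` gives `H_{r,N}` itself). -/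
def Hgen (h N : ℕ) (β : Fin h → Fin h → ℝ) (r : ℕ)
    (extra : (Fin r → Pt h) → Prop) : ℝ :=
  ∑ I : Fin r → Pt h,
    ind (seqOKfull h I ∧ extra I) *
      ∑' nx : (Fin r → ℕ) × (Fin r → Fin h → ℤ × ℤ),
        ind (StrictMono nx.1 ∧ ∀ i, 1 ≤ nx.1 i ∧ nx.1 i ≤ N) *
          ((∏ i : Fin r, sigI h N β (I i)) *
            ∏ i : Fin r,
              Pker h N β (nx.1 i - prev nx.1 i)
                (if (i : ℕ) = 0 then (⊤ : Pt h) else I (fpred i)) (I i)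
                (prev nx.2 i) (nx.2 i))

/-- `H_{r,N}` -/
def Hterm (h N : ℕ) (β : Fin h → Fin h → ℝ) (r : ℕ) : ℝ := Hgen h N β r fun _ => True

/-- `H^{multi}_{r,N}` : the part of `H_{r,N}` where at least one multiple collision
(three or more walks at the same site) occurs -/
def Hmulti (h N : ℕ) (β : Fin h → Fin h → ℝ) (r : ℕ) : ℝ :=
  Hgen h N β r fun I => ∃ j : Fin r, (I j).parts.card < h - 1

end ET

namespace ET

open scoped Classical

/-- Euclidean norm of a point of `ℤ²` -/
def znorm (v : ℤ × ℤ) : ℝ := Real.sqrt (((v.1 ^ 2 + v.2 ^ 2 : ℤ) : ℝ))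

/-- `ℐ^{(2)}` : sequences of partitions with `|I_j| = h-1` for all `j` and
`I_j ≠ I_{j+1}` -/
def seqOK2 (h : ℕ) {r : ℕ} (I : Fin r → Pt h) : Prop :=
  (∀ j : Fin r, (I j).parts.card = h - 1) ∧
    ∀ (j : ℕ) (hj : j + 1 < r), I ⟨j, by omega⟩ ≠ I ⟨j + 1, hj⟩

/-- the basic constraints of `𝒞_{r,N}`:
`0 =: a_1 ≤ b_1 < a_2 ≤ b_2 < ⋯ < a_r ≤ b_r ≤ N` and `x_1 = 0` -/
def inBase (h N : ℕ) {r : ℕ} (a b : Fin r → ℕ) (x y : Fin r → Fin h → ℤ × ℤ) : Prop :=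
  (∀ i : Fin r, (i : ℕ) = 0 → a i = 0 ∧ x i = 0) ∧
    (∀ i : Fin r, a i ≤ b i) ∧
    (∀ (j : ℕ) (hj : j + 1 < r), b ⟨j, by omega⟩ < a ⟨j + 1, hj⟩) ∧
    (∀ i : Fin r, b i ≤ N)

/-- the diffusivity constraints of `𝒞^{diff}_{r,N,R}` (with `y_0 := 0`, `b_0 := 0`):
`‖y_i - x_i‖_∞ ≤ R √(b_i - a_i)` and `‖x_i - y_{i-1}‖_∞ ≤ R √(a_i - b_{i-1})` -/
def Cdiff (h : ℕ) {r : ℕ} (R : ℝ) (a b : Fin r → ℕ) (x y : Fin r → Fin h → ℤ × ℤ) : Prop :=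
  ∀ i : Fin r,
    (∀ j : Fin h, znorm (y i j - x i j) ≤ R * Real.sqrt ((b i : ℝ) - (a i : ℝ))) ∧
    (∀ j : Fin h, znorm (x i j - prev y i j) ≤ R * Real.sqrt ((a i : ℝ) - ((prev b i : ℕ) : ℝ)))

/-- the scale-separation constraints: `a_{i+1} - b_i > M (b_i - b_{i-1})` -/
def Cgap {r : ℕ} (M : ℝ) (a b : Fin r → ℕ) : Prop :=
  ∀ (j : ℕ) (hj : j + 1 < r),
    ((a ⟨j + 1, hj⟩ : ℝ) - (b ⟨j, Nat.lt_of_succ_lt hj⟩ : ℝ)) >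
      M * ((b ⟨j, Nat.lt_of_succ_lt hj⟩ : ℝ) -
        ((prev b ⟨j, Nat.lt_of_succ_lt hj⟩ : ℕ) : ℝ))

/-- the constraints of `𝒞^{main}_{r,N,R,M}` -/
def Cmain (h : ℕ) {r : ℕ} (R M : ℝ) (a b : Fin r → ℕ) (x y : Fin r → Fin h → ℤ × ℤ) : Prop :=
  Cdiff h R a b x y ∧ Cgap M a b

/-- `H[𝒞]` : the weight
`Σ_{(I_1,…,I_r)∈ℐ^{(2)}} Σ_{(a,b,x,y)∈𝒞} 𝖴^{I_1}_{b_1}(0,y_1)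
Π_{i=2}^r Q^{I_{i-1};I_i}_{a_i-b_{i-1}}(y_{i-1},x_i) 𝖴^{I_i}_{b_i-a_i}(x_i,y_i) σ_N(I_i)`,
where `𝒞 ⊆ 𝒞_{r,N}` is cut out by the additional constraint `C`. -/
def HC (h N : ℕ) (β : Fin h → Fin h → ℝ) (r : ℕ)
    (C : (Fin r → ℕ) → (Fin r → ℕ) → (Fin r → Fin h → ℤ × ℤ) → (Fin r → Fin h → ℤ × ℤ) → Prop) :
    ℝ :=
  ∑ I : Fin r → Pt h,
    ind (seqOK2 h I) *
      ∑' t : (Fin r → ℕ) × (Fin r → ℕ) × (Fin r → Fin h → ℤ × ℤ) × (Fin r → Fin h → ℤ × ℤ),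
        ind (inBase h N t.1 t.2.1 t.2.2.1 t.2.2.2 ∧ C t.1 t.2.1 t.2.2.1 t.2.2.2) *
          ∏ i : Fin r,
            (if (i : ℕ) = 0 then
              Uker h N β (I i) (t.2.1 i - t.1 i) (t.2.2.1 i) (t.2.2.2 i)
            else
              Qker h (t.1 i - t.2.1 (fpred i)) (I (fpred i)) (I i)
                  (t.2.2.2 (fpred i)) (t.2.2.1 i) *
                Uker h N β (I i) (t.2.1 i - t.1 i) (t.2.2.1 i) (t.2.2.2 i) *
                sigI h N β (I i))

/-- `H^{diff}_{r,N,R} = H[𝒞^{diff}_{r,N,R}]` -/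
def Hdiff (h N : ℕ) (β : Fin h → Fin h → ℝ) (r : ℕ) (R : ℝ) : ℝ :=
  HC h N β r fun a b x y => Cdiff h R a b x y

/-- `H^{superdiff}_{r,N,R} = H[𝒞_{r,N} ∖ 𝒞^{diff}_{r,N,R}]` -/
def Hsuper (h N : ℕ) (β : Fin h → Fin h → ℝ) (r : ℕ) (R : ℝ) : ℝ :=
  HC h N β r fun a b x y => ¬ Cdiff h R a b x y

/-- `H^{main}_{r,N,R,M} = H[𝒞^{main}_{r,N,R,M}]` -/
def Hmain (h N : ℕ) (β : Fin h → Fin h → ℝ) (r : ℕ) (R M : ℝ) : ℝ :=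
  HC h N β r fun a b x y => Cmain h R M a b x y

end ET

namespace ET

open scoped Classical

/-- the indices `k < m` with `I_k = I_m` (i.e. with the same colliding pair, since
all partitions in `ℐ^{(2)}` are determined by their unique non-singleton pair) -/
def pSet {h r : ℕ} (I : Fin r → Pt h) (m : Fin r) : Finset (Fin r) :=
  Finset.univ.filter fun k => k < m ∧ I k = I m

/-- `b_{p(m)}` where `p(m) = max{k < m : I_k = I_m}`, with the convention
`b_{p(m)} = 0` if there is no such `k` -/
def pB {h r : ℕ} (I : Fin r → Pt h) (b : Fin r → ℕ) (m : Fin r) : ℕ :=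
  if hp : (pSet I m).Nonempty then b ((pSet I m).max' hp) else 0

/-- `y_{p(m)}`, with the convention `y_{p(m)} = 0` if `p(m) = 0` -/
def pY {h r : ℕ} {α : Type*} [Zero α] (I : Fin r → Pt h) (y : Fin r → α) (m : Fin r) : α :=
  if hp : (pSet I m).Nonempty then y ((pSet I m).max' hp) else 0

/-- the rewired sum `H^{rew}_{r,N,R,M}` -/
def Hrew (h N : ℕ) (β : Fin h → Fin h → ℝ) (r : ℕ) (R M : ℝ) : ℝ :=
  ∑ I : Fin r → Pt h,
    ind (seqOK2 h I) *
      ∑' t : (Fin r → ℕ) × (Fin r → ℕ) × (Fin r → Fin h → ℤ × ℤ) × (Fin r → Fin h → ℤ × ℤ),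
        ind (inBase h N t.1 t.2.1 t.2.2.1 t.2.2.2 ∧ Cmain h R M t.1 t.2.1 t.2.2.1 t.2.2.2) *
          ((∏ k : Fin r,
              ind (simRel (I k) (t.2.2.1 k)) * ind (simRel (I k) (t.2.2.2 k)) *
                ∑ p ∈ pairsOf h (I k),
                  U N (β p.1 p.2) (t.2.1 k - t.1 k) (t.2.2.2 k p.1 - t.2.2.1 k p.1) *
                    ∏ l ∈ Finset.univ.filter (fun l : Fin h => l ≠ p.1 ∧ l ≠ p.2),
                      q (t.2.1 k - t.1 k) (t.2.2.2 k l - t.2.2.1 k l)) *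
            ∏ m : Fin r,
              (if (m : ℕ) = 0 then 1 else
                ∑ p ∈ pairsOf h (I m),
                  sig N (β p.1 p.2) *
                    q (t.1 m - pB I t.2.1 m) (t.2.2.1 m p.1 - pY I t.2.2.2 m p.1) ^ 2 *
                    ∏ l ∈ Finset.univ.filter (fun l : Fin h => l ≠ p.1 ∧ l ≠ p.2),
                      q (t.1 m - t.2.1 (fpred m)) (t.2.2.1 m l - t.2.2.2 (fpred m) l)))

end ET

namespace ET

open scoped Classical

/-- the constraints of the rewired set `𝒞^{rew}_{r,N,R,M}(I⃗)` (besides those of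
`𝒞_{r,N}`): the constraint `‖x_m - y_{m-1}‖_∞ ≤ R√(a_m - b_{m-1})` is replaced, for
`m ≥ 2`, by diffusivity of the non-colliding coordinates with respect to `y_{m-1}`
and of the colliding pair with respect to the pair's previous collision point. -/
def Crew (h : ℕ) {r : ℕ} (I : Fin r → Pt h) (K : ℕ) (R M : ℝ)
    (a b : Fin r → ℕ) (x y : Fin r → Fin h → ℤ × ℤ) : Prop :=
  (∀ i : Fin r, ∀ j : Fin h,
      znorm (y i j - x i j) ≤ R * Real.sqrt ((b i : ℝ) - (a i : ℝ))) ∧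
  (∀ i : Fin r, (i : ℕ) = 0 → ∀ j : Fin h,
      znorm (x i j - prev y i j) ≤ R * Real.sqrt ((a i : ℝ) - ((prev b i : ℕ) : ℝ))) ∧
  (∀ i : Fin r, 1 ≤ (i : ℕ) → ∀ p ∈ pairsOf h (I i),
      (∀ l : Fin h, l ≠ p.1 → l ≠ p.2 →
        znorm (x i l - y (fpred i) l) ≤ R * Real.sqrt ((a i : ℝ) - (b (fpred i) : ℝ))) ∧
      (∀ l : Fin h, l = p.1 ∨ l = p.2 →
        znorm (x i l - pY I y i l) ≤
          R * (Real.sqrt (1 - 1 / M) * (1 - Real.sqrt ((2 * (K : ℝ) - 1) / (M - 1)))) *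
            Real.sqrt ((a i : ℝ) - ((pB I b i : ℕ) : ℝ)))) ∧
  Cgap M a b

open Real Finset

theorem sqrt_mul_sqrt_add_sqrt_le {s u v : ℝ} (hs : 0 ≤ s) (hu : 0 ≤ u) (hv : 0 ≤ v) :
    √s * √u + √v ≤ √(s + 1) * √(u + v) := by
  rw [← sqrt_mul hs, ← sqrt_mul (by positivity)]
  refine (le_sqrt (by positivity) (by positivity)).2 ?_
  -- AM-GM: `2 √(su) √v = 2 √(sv) √u ≤ sv + u`
  have hswap : √(s * u) * √v = √(s * v) * √u := by
    rw [← sqrt_mul (by positivity), ← sqrt_mul (by positivity)]; ring_nf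
  nlinarith [sq_nonneg (√(s * v) - √u), sq_sqrt (mul_nonneg hs hu), sq_sqrt hv,
    sq_sqrt (mul_nonneg hs hv), sq_sqrt hu]

theorem norm_sub_le_sqrt_mul_sqrt_sum {E : Type*} [SeminormedAddGroup E] {z : ℕ → E}
    {d : ℕ → ℝ} {C : ℝ} (hC : 0 ≤ C) (n : ℕ) (hd : ∀ k < n, 0 ≤ d k)
    (hz : ∀ k < n, ‖z (k + 1) - z k‖ ≤ C * √(d k)) :
    ‖z n - z 0‖ ≤ C * √n * √(∑ k ∈ range n, d k) := by
  induction n with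
  | zero => simp
  | succ n ih =>
    have hsum : 0 ≤ ∑ k ∈ range n, d k :=
      sum_nonneg fun k hk => hd k (Nat.lt_succ_of_lt (mem_range.1 hk))
    calc ‖z (n + 1) - z 0‖ ≤ ‖z n - z 0‖ + ‖z (n + 1) - z n‖ :=
          (norm_sub_le_norm_sub_add_norm_sub _ _ _).trans_eq (add_comm _ _)
      _ ≤ C * √n * √(∑ k ∈ range n, d k) + C * √(d n) :=
          add_le_add (ih (fun k hk => hd k (by omega)) (fun k hk => hz k (by omega)))
            (hz n (by omega))
      _ = C * (√n * √(∑ k ∈ range n, d k) + √(d n)) := by ring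
      _ ≤ C * (√(n + 1) * √(∑ k ∈ range n, d k + d n)) := by
          gcongr
          exact sqrt_mul_sqrt_add_sqrt_le n.cast_nonneg hsum (hd n (by omega))
      _ = C * √↑(n + 1) * √(∑ k ∈ range (n + 1), d k) := by
          rw [sum_range_succ]; push_cast; ring

theorem sub_one_mul_sub_le_of_gap {a b : ℕ → ℝ} {M : ℝ} {P n : ℕ} (hPn : P ≤ n)
    (hba : b P ≤ a (P + 1)) (hab : ∀ k < n, a (k + 1) ≤ b (k + 1))
    (hgap : ∀ k < n, M * (b (k + 1) - b k) < a (k + 1 + 1) - b (k + 1)) :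
    (M - 1) * (b n - b P) ≤ a (n + 1) - b n := by
  induction n, hPn using Nat.le_induction with
  | base => simpa using hba
  | succ n hPn ih =>
    have := ih (fun k hk => hab k (by omega)) (fun k hk => hgap k (by omega))
    nlinarith [hab n (by omega), hgap n (by omega)]

theorem rewired_bound_add_walk_bound_le {M κ A D : ℝ} {n : ℕ} (hn : 2 * (n : ℝ) ≤ κ)
    (hκM : κ < M - 1) (hD : 0 ≤ D) (hDA : (M - 1) * D ≤ A) :
    √(1 - 1 / M) * (1 - √(κ / (M - 1))) * √(A + D) + √2 * √n * √D ≤ √A := by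
  have hM : 0 < M - 1 := by linarith [n.cast_nonneg (α := ℝ)]
  have hκ1 : √(κ / (M - 1)) ≤ 1 := sqrt_le_one.2 ((div_le_one hM).2 hκM.le)
  have hfar : √(1 - 1 / M) * √(A + D) ≤ √A := by
    rw [← sqrt_mul (by rw [sub_nonneg, div_le_one (by linarith)]; linarith)]
    apply sqrt_le_sqrt
    have : A - (1 - 1 / M) * (A + D) = (A - (M - 1) * D) / M := by
      field_simp [(by linarith : M ≠ 0)]; ring
    nlinarith [div_nonneg (sub_nonneg.2 hDA) (by linarith : (0 : ℝ) ≤ M)]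
  have hnear : √2 * √n * √D ≤ √(κ / (M - 1)) * √A := by
    rw [← sqrt_mul zero_le_two, ← sqrt_mul (by positivity),
      ← sqrt_mul (div_nonneg (by linarith [n.cast_nonneg (α := ℝ)]) hM.le)]
    apply sqrt_le_sqrt
    calc 2 * n * D ≤ κ * (A / (M - 1)) :=
          mul_le_mul hn ((le_div_iff₀ hM).2 (by linarith)) hD
            (by linarith [n.cast_nonneg (α := ℝ)])
      _ = κ / (M - 1) * A := by ring
  calc √(1 - 1 / M) * (1 - √(κ / (M - 1))) * √(A + D) + √2 * √n * √D
      ≤ (1 - √(κ / (M - 1))) * √A + √(κ / (M - 1)) * √A := by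
        gcongr ?_ + ?_
        calc √(1 - 1 / M) * (1 - √(κ / (M - 1))) * √(A + D)
            = (1 - √(κ / (M - 1))) * (√(1 - 1 / M) * √(A + D)) := by ring
          _ ≤ (1 - √(κ / (M - 1))) * √A := by gcongr
    _ = √A := by ring

theorem norm_sub_le_of_rewired {E : Type*} [SeminormedAddGroup E] {a b : ℕ → ℝ} {x y : ℕ → E}
    {R M κ : ℝ} {n P : ℕ} (hR : 0 ≤ R) (hPn : P ≤ n) (hκ : 2 * ((n - P : ℕ) : ℝ) ≤ κ)
    (hκM : κ < M - 1)
    (hba : ∀ k ≤ n, b k ≤ a (k + 1)) (hab : ∀ k < n, a (k + 1) ≤ b (k + 1))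
    (hgap : ∀ k < n, M * (b (k + 1) - b k) < a (k + 1 + 1) - b (k + 1))
    (hin : ∀ k < n, ‖x (k + 1) - y k‖ ≤ R * √(a (k + 1) - b k))
    (hout : ∀ k < n, ‖y (k + 1) - x (k + 1)‖ ≤ R * √(b (k + 1) - a (k + 1)))
    (hrew : ‖x (n + 1) - y P‖ ≤
      R * (√(1 - 1 / M) * (1 - √(κ / (M - 1)))) * √(a (n + 1) - b P)) :
    ‖x (n + 1) - y n‖ ≤ R * √(a (n + 1) - b n) := by
  have hstep : ∀ k < n, ‖y (k + 1) - y k‖ ≤ R * √2 * √(b (k + 1) - b k) := by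
    intro k hk
    calc ‖y (k + 1) - y k‖ ≤ ‖y (k + 1) - x (k + 1)‖ + ‖x (k + 1) - y k‖ :=
          norm_sub_le_norm_sub_add_norm_sub _ _ _
      _ ≤ R * (√1 * √(b (k + 1) - a (k + 1)) + √(a (k + 1) - b k)) := by
          rw [sqrt_one, one_mul, mul_add]; exact add_le_add (hout k hk) (hin k hk)
      _ ≤ R * (√(1 + 1) * √(b (k + 1) - a (k + 1) + (a (k + 1) - b k))) := by
          gcongr
          exact sqrt_mul_sqrt_add_sqrt_le zero_le_one (by linarith [hab k hk])
            (by linarith [hba k hk.le])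
      _ = R * √2 * √(b (k + 1) - b k) := by norm_num; ring_nf
  have hincr : ∀ k < n - P, 0 ≤ b (P + k + 1) - b (P + k) := fun k hk => by
    linarith [hab (P + k) (by omega), hba (P + k) (by omega)]
  have htel : ∑ k ∈ range (n - P), (b (P + k + 1) - b (P + k)) = b n - b P := by
    simpa only [← add_assoc, Nat.add_sub_cancel' hPn, add_zero]
      using sum_range_sub (fun k => b (P + k)) (n - P)
  have hD : 0 ≤ b n - b P :=
    htel ▸ sum_nonneg fun k hk => hincr k (mem_range.1 hk)
  have hwalk : ‖y n - y P‖ ≤ R * √2 * √↑(n - P) * √(b n - b P) := by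
    have h := norm_sub_le_sqrt_mul_sqrt_sum (z := fun k => y (P + k)) (by positivity) (n - P)
      hincr (fun k hk => hstep (P + k) (by omega))
    rwa [htel, Nat.add_sub_cancel' hPn, add_zero] at h
  have hDA := sub_one_mul_sub_le_of_gap hPn (hba P hPn) hab hgap
  rw [show a (n + 1) - b P = (a (n + 1) - b n) + (b n - b P) by ring] at hrew
  calc ‖x (n + 1) - y n‖ ≤ ‖x (n + 1) - y P‖ + ‖y n - y P‖ :=
        (norm_sub_le_norm_sub_add_norm_sub _ _ _).trans_eq (by rw [norm_sub_rev (y P)])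
    _ ≤ R * (√(1 - 1 / M) * (1 - √(κ / (M - 1)))) * √((a (n + 1) - b n) + (b n - b P))
          + R * √2 * √↑(n - P) * √(b n - b P) := add_le_add hrew hwalk
    _ = R * (√(1 - 1 / M) * (1 - √(κ / (M - 1))) * √((a (n + 1) - b n) + (b n - b P))
          + √2 * √↑(n - P) * √(b n - b P)) := by ring
    _ ≤ R * √(a (n + 1) - b n) := by
        gcongr
        exact rewired_bound_add_walk_bound_le hκ hκM hD hDA

section

variable {r : ℕ} {α : Type*} [Zero α]

/-- `oneIndexed f t` is `f_t` in the paper's 1-based indexing, with `f_0 := 0`. -/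
def oneIndexed (f : Fin r → α) : ℕ → α
  | 0 => 0
  | k + 1 => if hk : k < r then f ⟨k, hk⟩ else 0

@[simp]
theorem oneIndexed_zero (f : Fin r → α) : oneIndexed f 0 = 0 := rfl

theorem oneIndexed_succ_of_lt (f : Fin r → α) {k : ℕ} (hk : k < r) :
    oneIndexed f (k + 1) = f ⟨k, hk⟩ :=
  dif_pos hk

@[simp]
theorem oneIndexed_val_succ (f : Fin r → α) (i : Fin r) : oneIndexed f (i + 1) = f i :=
  dif_pos i.isLt

theorem oneIndexed_map {β : Type*} [Zero β] (g : α → β) (hg : g 0 = 0) (f : Fin r → α) (t : ℕ) :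
    g (oneIndexed f t) = oneIndexed (fun k => g (f k)) t := by
  rcases t with _ | k
  · exact hg
  · by_cases hk : k < r <;> simp [oneIndexed, hk, hg]

theorem prev_eq_oneIndexed (f : Fin r → α) (i : Fin r) : prev f i = oneIndexed f i := by
  obtain ⟨_ | k, hk⟩ := i
  · rfl
  · simp [prev, fpred, oneIndexed, Nat.lt_of_succ_lt hk]

/-- The paper's `p(m)` for the block with 0-based index `m`, itself in 1-based indexing
(`0` if the pair of `I m` has not collided before). -/
def prevCollision {h : ℕ} (I : Fin r → Pt h) (m : Fin r) : ℕ :=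
  if hp : (pSet I m).Nonempty then (pSet I m).max' hp + 1 else 0

theorem prevCollision_le {h : ℕ} (I : Fin r → Pt h) (m : Fin r) : prevCollision I m ≤ m := by
  unfold prevCollision
  split_ifs with hp
  · exact (mem_filter.1 ((pSet I m).max'_mem hp)).2.1
  · exact Nat.zero_le _

theorem pY_eq_oneIndexed {h : ℕ} (I : Fin r → Pt h) (f : Fin r → α) (m : Fin r) :
    pY I f m = oneIndexed f (prevCollision I m) := by
  unfold pY prevCollision
  split_ifs <;> simp

theorem pB_eq_oneIndexed {h : ℕ} (I : Fin r → Pt h) (b : Fin r → ℕ) (m : Fin r) :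
    pB I b m = oneIndexed b (prevCollision I m) :=
  pY_eq_oneIndexed I b m

end

def toComplex : ℤ × ℤ →+ ℂ where
  toFun v := ⟨v.1, v.2⟩
  map_zero' := by simp [Complex.ext_iff]
  map_add' u v := by simp [Complex.ext_iff]

theorem znorm_eq_norm_toComplex (v : ℤ × ℤ) : znorm v = ‖toComplex v‖ := by
  rw [znorm, Complex.norm_def, Complex.normSq_apply]
  push_cast
  ring_nf
  rfl

theorem exists_mem_pairsOf {h : ℕ} (J : Pt h) (hJ : J.parts.card < h) : ∃ p, p ∈ pairsOf h J := by
  obtain ⟨t, ht, hcard⟩ : ∃ t ∈ J.parts, 1 < t.card := by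
    by_contra! hall
    have := J.sum_card_parts ▸ sum_le_sum hall
    simp only [card_univ, Fintype.card_fin, sum_const, smul_eq_mul, mul_one] at this
    omega
  obtain ⟨u, hu, v, hv, huv⟩ := Finset.one_lt_card.1 hcard
  rcases lt_or_gt_of_ne huv with hlt | hlt
  · exact ⟨(u, v), mem_filter.2 ⟨mem_univ _, hlt, t, ht, hu, hv⟩⟩
  · exact ⟨(v, u), mem_filter.2 ⟨mem_univ _, hlt, t, ht, hv, hu⟩⟩

section

variable {h r K : ℕ} {I : Fin r → Pt h} {R M : ℝ} {a b : Fin r → ℕ}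
  {x y : Fin r → Fin h → ℤ × ℤ}

theorem znorm_sub_prev_le_of_collision (hr : r ≤ K) (hM : 2 * (K : ℝ) < M) (hR : 0 ≤ R)
    (hab : ∀ i, a i ≤ b i) (hba : ∀ (k : ℕ) (hk : k + 1 < r), b ⟨k, by omega⟩ < a ⟨k + 1, hk⟩)
    (hgap : Cgap M a b) (hout : ∀ i j, znorm (y i j - x i j) ≤ R * √((b i : ℝ) - (a i : ℝ)))
    (i : Fin r) (j : Fin h)
    (hin : ∀ k < i, znorm (x k j - prev y k j) ≤ R * √((a k : ℝ) - ((prev b k : ℕ) : ℝ)))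
    (hrew : znorm (x i j - pY I y i j) ≤
      R * (√(1 - 1 / M) * (1 - √((2 * (K : ℝ) - 1) / (M - 1)))) *
        √((a i : ℝ) - ((pB I b i : ℕ) : ℝ))) :
    znorm (x i j - prev y i j) ≤ R * √((a i : ℝ) - ((prev b i : ℕ) : ℝ)) := by
  have hY : ∀ (f : Fin r → Fin h → ℤ × ℤ) t,
      toComplex (oneIndexed f t j) = oneIndexed (fun k => toComplex (f k j)) t :=
    oneIndexed_map (fun v : Fin h → ℤ × ℤ => toComplex (v j)) (by simp)
  have hcast : ∀ (f : Fin r → ℕ) t,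
      ((oneIndexed f t : ℕ) : ℝ) = oneIndexed (fun k => (f k : ℝ)) t :=
    oneIndexed_map Nat.cast Nat.cast_zero
  have hXi : oneIndexed (fun k => toComplex (x k j)) (i + 1) = toComplex (x i j) :=
    oneIndexed_val_succ _ i
  have hAi : oneIndexed (fun k => (a k : ℝ)) (i + 1) = a i := oneIndexed_val_succ _ i
  rw [pY_eq_oneIndexed, pB_eq_oneIndexed] at hrew
  rw [prev_eq_oneIndexed, prev_eq_oneIndexed]
  rw [znorm_eq_norm_toComplex, map_sub, ← hXi, hY, hcast, ← hAi] at hrew ⊢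
  refine norm_sub_le_of_rewired (κ := 2 * K - 1) hR (prevCollision_le I i) ?_ (by linarith)
    ?_ ?_ ?_ ?_ ?_ hrew
  · have hlt : (i : ℕ) - prevCollision I i + 1 ≤ K := by omega
    have : (((i : ℕ) - prevCollision I i : ℕ) : ℝ) + 1 ≤ K := by exact_mod_cast hlt
    linarith
  · rintro (_ | k) hk
    · rw [oneIndexed_zero, oneIndexed_succ_of_lt _ (by omega : 0 < r)]
      positivity
    · simp only [oneIndexed_succ_of_lt _ (by omega : k < r),
        oneIndexed_succ_of_lt _ (by omega : k + 1 < r)]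
      exact_mod_cast (hba k (by omega)).le
  · intro k hk
    simp only [oneIndexed_succ_of_lt _ (by omega : k < r)]
    exact_mod_cast hab _
  · intro k hk
    have := hgap k (by omega)
    rw [prev_eq_oneIndexed, hcast] at this
    simp only [oneIndexed_succ_of_lt _ (by omega : k < r),
      oneIndexed_succ_of_lt _ (by omega : k + 1 < r)]
    exact this
  · intro k hk
    have := hin ⟨k, by omega⟩ hk
    rw [znorm_eq_norm_toComplex, map_sub, prev_eq_oneIndexed, hY, prev_eq_oneIndexed,
      hcast] at this
    simp only [oneIndexed_succ_of_lt _ (by omega : k < r)]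
    exact this
  · intro k hk
    simp only [oneIndexed_succ_of_lt _ (by omega : k < r)]
    rw [← map_sub, ← znorm_eq_norm_toComplex]
    exact hout _ j

theorem Crew.znorm_sub_prev_le {N : ℕ} (hI : seqOK2 h I) (hr : r ≤ K) (hM : 2 * (K : ℝ) < M)
    (hR : 0 ≤ R) (hbase : inBase h N a b x y) (hrew : Crew h I K R M a b x y) (i : Fin r)
    (j : Fin h) :
    znorm (x i j - prev y i j) ≤ R * √((a i : ℝ) - ((prev b i : ℕ) : ℝ)) := by
  obtain ⟨-, hab, hba, -⟩ := hbase
  obtain ⟨hout, hfirst, hlater, hgap⟩ := hrew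
  induction i using WellFoundedLT.induction generalizing j with
  | _ i ih =>
  rcases Nat.eq_zero_or_pos i with h0 | hpos
  · exact hfirst i h0 j
  obtain ⟨p, hp⟩ := exists_mem_pairsOf (I i) (by rw [hI.1 i]; have := j.pos; omega)
  obtain ⟨hfree, hpair⟩ := hlater i hpos p hp
  by_cases hj : j = p.1 ∨ j = p.2
  · exact znorm_sub_prev_le_of_collision hr hM hR hab hba hgap hout i j
      (fun k hk => ih k hk j) (hpair j hj)
  · rw [not_or] at hj
    simp only [prev, if_neg hpos.ne']
    exact hfree j hj.1 hj.2

end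

theorem statement16_general (h : ℕ)
    (K : ℕ) (r : ℕ) (hr : r ≤ K) (M : ℝ) (hM : 2 * (K : ℝ) < M)
    (I : Fin r → Pt h) (hI : seqOK2 h I)
    (N : ℕ) (R : ℝ) (hR : 0 < R) :
    ∀ (a b : Fin r → ℕ) (x y : Fin r → Fin h → ℤ × ℤ),
      inBase h N a b x y → Crew h I K R M a b x y →
      inBase h N a b x y ∧ Cmain h R M a b x y := fun _ _ _ _ hbase hrew =>
  ⟨hbase, fun i => ⟨hrew.1 i, hrew.znorm_sub_prev_le hI hr hM hR.le hbase i⟩, hrew.2.2.2⟩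

/-- **The rewired constraint set is contained in the main one:** for `0 ≤ r ≤ K` and
`M > 2K`, every tuple of `𝒞_{r,N}` satisfying the rewired constraints satisfies the
constraints of `𝒞^{main}_{r,N,R,M}`. -/
theorem statement16 (h : ℕ) (hh : 2 ≤ h)
    (K : ℕ) (r : ℕ) (hr : r ≤ K) (M : ℝ) (hM : 2 * (K : ℝ) < M)
    (I : Fin r → Pt h) (hI : seqOK2 h I)
    (N : ℕ) (hN : 2 ≤ N) (R : ℝ) (hR : 0 < R) :
    ∀ (a b : Fin r → ℕ) (x y : Fin r → Fin h → ℤ × ℤ),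
      inBase h N a b x y → Crew h I K R M a b x y →
      inBase h N a b x y ∧ Cmain h R M a b x y :=
  statement16_general h K r hr M hM I hI N R hR

end ET
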